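/- There is no C² function C : U → ℝ on a nonempty open set U ⊆ ℝ⁴ containing a point with σ(y - x) ≠ 0, satisfying ∂C/∂x = x(ρ - z) - y and ∂C/∂u = σ(y - x) simultaneously. -/

import Mathlib

/-!
Both prescribed partial derivatives of `C` are explicit near a point of `U`, so the two mixed
second partials `∂ₓ∂ᵤC` and `∂ᵤ∂ₓC` can be read off from them: differentiating
`x(ρ - z) - y` in `u` gives `0`, differentiating `σ(y - x)` in `x` gives `-σ`. Since `C` is `C²`,
Schwarz's theorem forces these to agree, hence `σ = 0`.
-/

open Filter Topology

section Schwarz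

variable {E F : Type*} [NormedAddCommGroup E] [NormedSpace ℝ E]
  [NormedAddCommGroup F] [NormedSpace ℝ F] {f : E → F} {x : E}

theorem ContDiffAt.fderiv_fderiv_apply_comm (hf : ContDiffAt ℝ 2 f x) (v w : E) :
    fderiv ℝ (fun y => fderiv ℝ f y v) x w = fderiv ℝ (fun y => fderiv ℝ f y w) x v := by
  have hdf : DifferentiableAt ℝ (fderiv ℝ f) x :=
    (hf.fderiv_right (m := 1) le_rfl).differentiableAt one_ne_zero
  simp only [fderiv_clm_apply hdf (differentiableAt_const _), fderiv_fun_const]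
  simpa using hf.isSymmSndFDerivAt (by simp) w v

theorem ContDiffAt.fderiv_apply_comm_of_eventuallyEq (hf : ContDiffAt ℝ 2 f x) {v w : E}
    {g h : E → F} (hg : (fun y => fderiv ℝ f y v) =ᶠ[𝓝 x] g)
    (hh : (fun y => fderiv ℝ f y w) =ᶠ[𝓝 x] h) :
    fderiv ℝ g x w = fderiv ℝ h x v := by
  rw [← hg.fderiv_eq, ← hh.fderiv_eq]
  exact hf.fderiv_fderiv_apply_comm v w

end Schwarz

theorem fderiv_lorenz_x_rhs_apply_u (ρ : ℝ) (q : ℝ × ℝ × ℝ × ℝ) :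
    fderiv ℝ (fun q : ℝ × ℝ × ℝ × ℝ => q.1 * (ρ - q.2.2.1) - q.2.1) q (0, 0, 0, 1) = 0 := by
  simp (disch := fun_prop) [fderiv_fun_sub, fderiv_fun_mul, fderiv.fst, fderiv.snd]

theorem fderiv_lorenz_u_rhs_apply_x (σ : ℝ) (q : ℝ × ℝ × ℝ × ℝ) :
    fderiv ℝ (fun q : ℝ × ℝ × ℝ × ℝ => σ * (q.2.1 - q.1)) q (1, 0, 0, 0) = -σ := by
  simp (disch := fun_prop) [fderiv_const_mul, fderiv_fun_sub, fderiv.fst, fderiv.snd]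

theorem null_permutation_4312_general (σ ρ : ℝ) (hσ : 0 < σ)
    (U : Set (ℝ × ℝ × ℝ × ℝ)) (hU : IsOpen U)
    (q₀ : ℝ × ℝ × ℝ × ℝ) (hq₀ : q₀ ∈ U) :
    ¬ ∃ C : ℝ × ℝ × ℝ × ℝ → ℝ, ContDiff ℝ 2 C ∧
      (∀ q ∈ U, fderiv ℝ C q (1, 0, 0, 0) = q.1 * (ρ - q.2.2.1) - q.2.1) ∧
      (∀ q ∈ U, fderiv ℝ C q (0, 0, 0, 1) = σ * (q.2.1 - q.1)) := by
  rintro ⟨C, hC, hx, hu⟩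
  have hUq₀ : U ∈ 𝓝 q₀ := hU.mem_nhds hq₀
  have hmixed := hC.contDiffAt.fderiv_apply_comm_of_eventuallyEq
    (eventually_of_mem hUq₀ hx) (eventually_of_mem hUq₀ hu)
  rw [fderiv_lorenz_x_rhs_apply_u, fderiv_lorenz_u_rhs_apply_x] at hmixed
  linarith

/-- Null permutations 4312/4321: there is no C² function C on ℝ⁴ satisfying
∂C/∂x = x(ρ - z) - y and ∂C/∂u = σ(y - x) on a nonempty open set containing a
point with σ(y - x) ≠ 0. -/
theorem null_permutation_4312 (σ ρ β : ℝ) (hσ : 0 < σ)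
    (U : Set (ℝ × ℝ × ℝ × ℝ)) (hU : IsOpen U)
    (q₀ : ℝ × ℝ × ℝ × ℝ) (hq₀ : q₀ ∈ U) (h₀ : σ * (q₀.2.1 - q₀.1) ≠ 0) :
    ¬ ∃ C : ℝ × ℝ × ℝ × ℝ → ℝ, ContDiff ℝ 2 C ∧
      (∀ q ∈ U, fderiv ℝ C q (1, 0, 0, 0) = q.1 * (ρ - q.2.2.1) - q.2.1) ∧
      (∀ q ∈ U, fderiv ℝ C q (0, 0, 0, 1) = σ * (q.2.1 - q.1)) :=
  null_permutation_4312_general σ ρ hσ U hU q₀ hq₀
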